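/- arXiv:1410.7541 — 2 statements merged into one kernel-verified Lean document; each statement's English description precedes it below -/
import Mathlib

section
/- Let A ≥ 1, ν > 0 and let u^{n+1} = (1 - AτΔ)(1 + ντΔ² - AτΔ)^{-1} u^n + τΔΠ_N(1 + ντΔ² - AτΔ)^{-1} f(u^n) with f(u) = u³ - u, u^n ∈ X_N mean-zero. Then ||u^{n+1}||_{Ḣ¹(𝕋²)} ≤ (1 + 1/A + (3/A)||u^n||_∞²) · ||u^n||_{Ḣ¹(𝕋²)}. -/
/-!
On `X_N` the scheme is diagonal in Fourier space: `u^{n+1} = M u^n - K Π_N f(u^n)`, where the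
symbols of `M = (1 - AτΔ)(1 + ντΔ² - AτΔ)⁻¹` and `K = -τΔ(1 + ντΔ² - AτΔ)⁻¹` are bounded by `1`
and `1/A`. As the `Ḣ¹` norm of a trigonometric polynomial is a weighted `ℓ²` norm of its
coefficients, `‖u^{n+1}‖_{Ḣ¹} ≤ ‖u^n‖_{Ḣ¹} + A⁻¹ ‖Π_N f(u^n)‖_{Ḣ¹}`. Integrating by parts twice,
and using that `ΔΠ_N f(u^n) ∈ X_N` is orthogonal to `f(u^n) - Π_N f(u^n)`, gives
`‖∇Π_N f(u^n)‖₂² = ∫ ∇f(u^n) · ∇Π_N f(u^n)`, hence `‖Π_N f(u^n)‖_{Ḣ¹} ≤ ‖f(u^n)‖_{Ḣ¹}` by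
Cauchy–Schwarz; the chain rule bounds the latter by `(3‖u^n‖_∞² + 1) ‖u^n‖_{Ḣ¹}`.
-/

open MeasureTheory

noncomputable section

/-- The periodicity cell `[0,2π]² ⊂ ℝ²`. -/
def torusBox : Set (ℝ × ℝ) := Set.Icc (0, 0) (2 * Real.pi, 2 * Real.pi)

/-- First partial derivative. -/
def pd1 (u : ℝ × ℝ → ℝ) : ℝ × ℝ → ℝ := fun x => fderiv ℝ u x (1, 0)

/-- Second partial derivative. -/
def pd2 (u : ℝ × ℝ → ℝ) : ℝ × ℝ → ℝ := fun x => fderiv ℝ u x (0, 1)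

/-- Laplacian on `ℝ²`. -/
def lap (u : ℝ × ℝ → ℝ) : ℝ × ℝ → ℝ := fun x => pd1 (pd1 u) x + pd2 (pd2 u) x

/-- `u ∈ X_N`: a real trigonometric polynomial with frequencies `|k| ≤ N`. -/
def IsTrigPoly (N : ℕ) (u : ℝ × ℝ → ℝ) : Prop :=
  ∃ a b : ℤ × ℤ → ℝ,
    (∀ k : ℤ × ℤ, ((N : ℝ)) ^ 2 < (k.1 : ℝ) ^ 2 + (k.2 : ℝ) ^ 2 → a k = 0 ∧ b k = 0) ∧
    ∀ x : ℝ × ℝ, u x = ∑ k ∈ Finset.Icc (-(N : ℤ), -(N : ℤ)) ((N : ℤ), (N : ℤ)),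
      (a k * Real.cos ((k.1 : ℝ) * x.1 + (k.2 : ℝ) * x.2) +
       b k * Real.sin ((k.1 : ℝ) * x.1 + (k.2 : ℝ) * x.2))

/-- Square of the `L²(𝕋²)` norm. -/
def L2sq (u : ℝ × ℝ → ℝ) : ℝ := ∫ x in torusBox, (u x) ^ 2

/-- `L^∞` norm. -/
def Linf (u : ℝ × ℝ → ℝ) : ℝ := ⨆ x : ℝ × ℝ, |u x|

/-- The Cahn–Hilliard energy `E(u) = ∫ (ν/2)|∇u|² + (1/4)(u²-1)²`. -/
def ECH (ν : ℝ) (u : ℝ × ℝ → ℝ) : ℝ :=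
  ∫ x in torusBox, (ν / 2 * ((pd1 u x) ^ 2 + (pd2 u x) ^ 2) +
    (1 / 4) * ((u x) ^ 2 - 1) ^ 2)

/-- Square of the `Ḣ¹(𝕋²)` norm, `∫ |∇u|²`. -/
def H1sq (u : ℝ × ℝ → ℝ) : ℝ := ∫ x in torusBox, ((pd1 u x) ^ 2 + (pd2 u x) ^ 2)


open Real Function

def freqBox (N : ℕ) : Finset (ℤ × ℤ) := Finset.Icc (-(N : ℤ), -(N : ℤ)) ((N : ℤ), (N : ℤ))

def phase (k : ℤ × ℤ) : ℝ × ℝ →L[ℝ] ℝ :=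
  (k.1 : ℝ) • ContinuousLinearMap.fst ℝ ℝ ℝ + (k.2 : ℝ) • ContinuousLinearMap.snd ℝ ℝ ℝ

def trigPoly (N : ℕ) (a b : ℤ × ℤ → ℝ) (x : ℝ × ℝ) : ℝ :=
  ∑ k ∈ freqBox N, (a k * cos (phase k x) + b k * sin (phase k x))

def freqSq (k : ℤ × ℤ) : ℝ := (k.1 : ℝ) ^ 2 + (k.2 : ℝ) ^ 2

lemma phase_apply (k : ℤ × ℤ) (x : ℝ × ℝ) : phase k x = k.1 * x.1 + k.2 * x.2 := by
  simp [phase]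

lemma phase_add (k l : ℤ × ℤ) (x : ℝ × ℝ) : phase (k + l) x = phase k x + phase l x := by
  simp only [phase_apply, Prod.fst_add, Prod.snd_add, Int.cast_add]; ring

lemma phase_neg (k : ℤ × ℤ) (x : ℝ × ℝ) : phase (-k) x = -phase k x := by
  simp only [phase_apply, Prod.fst_neg, Prod.snd_neg, Int.cast_neg]; ring

lemma phase_sub (k l : ℤ × ℤ) (x : ℝ × ℝ) : phase (k - l) x = phase k x - phase l x := by
  rw [sub_eq_add_neg, phase_add, phase_neg, sub_eq_add_neg]

lemma freqSq_neg (k : ℤ × ℤ) : freqSq (-k) = freqSq k := by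
  simp [freqSq]

lemma freqSq_nonneg (k : ℤ × ℤ) : 0 ≤ freqSq k := by
  unfold freqSq; positivity

lemma neg_mem_freqBox {N : ℕ} {k : ℤ × ℤ} (hk : k ∈ freqBox N) : -k ∈ freqBox N := by
  simp only [freqBox, Finset.mem_Icc, Prod.le_def, Prod.fst_neg, Prod.snd_neg] at *
  omega

lemma sum_freqBox_neg (N : ℕ) (f : ℤ × ℤ → ℝ) :
    ∑ k ∈ freqBox N, f (-k) = ∑ k ∈ freqBox N, f k :=
  Finset.sum_nbij' (fun k => -k) (fun k => -k) (fun _ => neg_mem_freqBox)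
    (fun _ => neg_mem_freqBox) (fun _ _ => neg_neg _) (fun _ _ => neg_neg _) (fun _ _ => rfl)

lemma IsTrigPoly.exists_eq_trigPoly {N : ℕ} {u : ℝ × ℝ → ℝ} (hu : IsTrigPoly N u) :
    ∃ a b : ℤ × ℤ → ℝ, (∀ k : ℤ × ℤ, (N : ℝ) ^ 2 < freqSq k → a k = 0 ∧ b k = 0) ∧
      u = trigPoly N a b := by
  obtain ⟨a, b, hab, hu⟩ := hu
  exact ⟨a, b, hab, funext fun x => by simp [hu x, trigPoly, freqBox, phase_apply]⟩

lemma trigPoly_sub (N : ℕ) (a b c d : ℤ × ℤ → ℝ) :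
    trigPoly N (a - c) (b - d) = trigPoly N a b - trigPoly N c d := by
  ext x
  simp only [trigPoly, Pi.sub_apply, ← Finset.sum_sub_distrib]
  exact Finset.sum_congr rfl fun k _ => by ring

section TrigPoly

variable (N : ℕ) (a b : ℤ × ℤ → ℝ)

-- The coefficients are not unique: `trigPoly N a b` depends only on `a k + a (-k)` and
-- `b k - b (-k)`.
lemma trigPoly_eq_half_sum_symm (x : ℝ × ℝ) :
    trigPoly N a b x = (∑ k ∈ freqBox N, ((a k + a (-k)) * cos (phase k x) +
      (b k - b (-k)) * sin (phase k x))) / 2 := by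
  have hneg : ∑ k ∈ freqBox N, (a (-k) * cos (phase k x) - b (-k) * sin (phase k x)) =
      trigPoly N a b x := by
    rw [trigPoly, ← sum_freqBox_neg]
    exact Finset.sum_congr rfl fun k _ => by simp [phase_neg]
  rw [eq_div_iff two_ne_zero, mul_two]
  nth_rewrite 2 [← hneg]
  rw [trigPoly, ← Finset.sum_add_distrib]
  exact Finset.sum_congr rfl fun k _ => by ring

lemma hasFDerivAt_trigPoly (x : ℝ × ℝ) :
    HasFDerivAt (trigPoly N a b)
      (∑ k ∈ freqBox N, (b k * cos (phase k x) - a k * sin (phase k x)) • phase k) x := by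
  refine HasFDerivAt.fun_sum fun k _ => ?_
  have hc := (hasDerivAt_cos (phase k x)).comp_hasFDerivAt x (phase k).hasFDerivAt
  have hs := (hasDerivAt_sin (phase k x)).comp_hasFDerivAt x (phase k).hasFDerivAt
  refine ((hc.const_mul (a k)).add (hs.const_mul (b k))).congr_fderiv ?_
  module

lemma fderiv_trigPoly_apply (x v : ℝ × ℝ) :
    fderiv ℝ (trigPoly N a b) x v =
      trigPoly N (fun k => phase k v * b k) (fun k => -(phase k v * a k)) x := by
  simp only [(hasFDerivAt_trigPoly N a b x).fderiv, trigPoly, FunLike.coe_sum,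
    Finset.sum_apply, FunLike.coe_smul, Pi.smul_apply, smul_eq_mul]
  exact Finset.sum_congr rfl fun k _ => by ring

lemma pd1_trigPoly :
    pd1 (trigPoly N a b) = trigPoly N (fun k => k.1 * b k) (fun k => -(k.1 * a k)) := by
  ext x
  simp [pd1, fderiv_trigPoly_apply, phase_apply]

lemma pd2_trigPoly :
    pd2 (trigPoly N a b) = trigPoly N (fun k => k.2 * b k) (fun k => -(k.2 * a k)) := by
  ext x
  simp [pd2, fderiv_trigPoly_apply, phase_apply]

lemma lap_trigPoly :
    lap (trigPoly N a b) =
      trigPoly N (fun k => -(freqSq k * a k)) (fun k => -(freqSq k * b k)) := by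
  ext x
  simp only [lap, pd1_trigPoly, pd2_trigPoly, trigPoly, ← Finset.sum_add_distrib]
  exact Finset.sum_congr rfl fun k _ => by rw [freqSq]; ring

@[fun_prop]
lemma contDiff_trigPoly {n : WithTop ℕ∞} :
    ContDiff ℝ n (trigPoly N a b) := by
  unfold trigPoly
  fun_prop

@[fun_prop]
lemma continuous_trigPoly : Continuous (trigPoly N a b) :=
  (contDiff_trigPoly N a b (n := 0)).continuous

lemma abs_trigPoly_le (x : ℝ × ℝ) :
    |trigPoly N a b x| ≤ ∑ k ∈ freqBox N, (|a k| + |b k|) := by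
  refine (Finset.abs_sum_le_sum_abs _ _).trans (Finset.sum_le_sum fun k _ => ?_)
  refine (abs_add_le _ _).trans ?_
  rw [abs_mul, abs_mul]
  gcongr
  · exact mul_le_of_le_one_right (abs_nonneg _) (abs_cos_le_one _)
  · exact mul_le_of_le_one_right (abs_nonneg _) (abs_sin_le_one _)

lemma abs_trigPoly_le_Linf (x : ℝ × ℝ) :
    |trigPoly N a b x| ≤ Linf (trigPoly N a b) :=
  le_ciSup (f := fun x => |trigPoly N a b x|)
    ⟨_, Set.forall_mem_range.2 (abs_trigPoly_le N a b)⟩ x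

end TrigPoly

lemma trigPoly_congr_symm {N : ℕ} {a b a' b' : ℤ × ℤ → ℝ}
    (ha : ∀ k ∈ freqBox N, a k + a (-k) = a' k + a' (-k))
    (hb : ∀ k ∈ freqBox N, b k - b (-k) = b' k - b' (-k)) :
    trigPoly N a b = trigPoly N a' b' := by
  ext x
  rw [trigPoly_eq_half_sum_symm, trigPoly_eq_half_sum_symm]
  congr 1
  exact Finset.sum_congr rfl fun k hk => by rw [ha k hk, hb k hk]

lemma IsTrigPoly.lap {N : ℕ} {u : ℝ × ℝ → ℝ} (hu : IsTrigPoly N u) : IsTrigPoly N (lap u) := by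
  obtain ⟨a, b, hab, rfl⟩ := hu.exists_eq_trigPoly
  refine ⟨fun k => -(freqSq k * a k), fun k => -(freqSq k * b k), fun k hk => ?_, fun x => ?_⟩
  · simp [(hab k hk).1, (hab k hk).2]
  · simp [lap_trigPoly, trigPoly, freqBox, phase_apply]

lemma integrableOn_torusBox {f : ℝ × ℝ → ℝ} (hf : Continuous f) : IntegrableOn f torusBox :=
  hf.continuousOn.integrableOn_compact isCompact_Icc

lemma integral_torusBox_eq_iterated {f : ℝ × ℝ → ℝ} (hf : Continuous f) :
    ∫ x in torusBox, f x = ∫ s in Set.Icc 0 (2 * π), ∫ t in Set.Icc 0 (2 * π), f (s, t) := by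
  rw [torusBox, ← Set.Icc_prod_Icc, Measure.volume_eq_prod]
  exact setIntegral_prod f (hf.continuousOn.integrableOn_compact (isCompact_Icc.prod isCompact_Icc))

lemma integral_cos_int_mul_add (n : ℤ) (θ : ℝ) :
    ∫ t in Set.Icc 0 (2 * π), cos (n * t + θ) = if n = 0 then 2 * π * cos θ else 0 := by
  rw [integral_Icc_eq_integral_Ioc, ← intervalIntegral.integral_of_le two_pi_pos.le]
  split_ifs with hn
  · simp [hn]
  · have hn' : (n : ℝ) ≠ 0 := Int.cast_ne_zero.2 hn
    have hper : sin (n * (2 * π) + θ) = sin θ := by rw [add_comm, sin_add_int_mul_two_pi]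
    rw [intervalIntegral.integral_comp_mul_add (fun t => cos t) hn', integral_cos]
    simp [hper]

lemma integral_cos_phase_add (m : ℤ × ℤ) (θ : ℝ) :
    ∫ x in torusBox, cos (phase m x + θ) = if m = 0 then 4 * π ^ 2 * cos θ else 0 := by
  rw [integral_torusBox_eq_iterated (by fun_prop)]
  have hinner (s : ℝ) : ∫ t in Set.Icc 0 (2 * π), cos (phase m (s, t) + θ) =
      if m.2 = 0 then 2 * π * cos (m.1 * s + θ) else 0 := by
    have h (t : ℝ) : phase m (s, t) + θ = m.2 * t + (m.1 * s + θ) := by rw [phase_apply]; ring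
    simp_rw [h]
    exact integral_cos_int_mul_add m.2 _
  simp_rw [hinner]
  obtain ⟨m1, m2⟩ := m
  by_cases h2 : m2 = 0
  · simp only [h2, if_true, integral_const_mul, integral_cos_int_mul_add, Prod.mk_eq_zero, and_true]
    split_ifs <;> ring
  · simp [h2]

lemma integral_cos_phase (m : ℤ × ℤ) :
    ∫ x in torusBox, cos (phase m x) = if m = 0 then 4 * π ^ 2 else 0 := by
  simpa using integral_cos_phase_add m 0

lemma integral_sin_phase (m : ℤ × ℤ) : ∫ x in torusBox, sin (phase m x) = 0 := by
  simp_rw [← cos_sub_pi_div_two, sub_eq_add_neg, integral_cos_phase_add]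
  simp

lemma integral_cos_mul_cos (l k : ℤ × ℤ) :
    ∫ x in torusBox, cos (phase l x) * cos (phase k x) =
      (if l = k then 2 * π ^ 2 else 0) + (if l = -k then 2 * π ^ 2 else 0) := by
  have h (x : ℝ × ℝ) : cos (phase l x) * cos (phase k x) =
      cos (phase (l - k) x) / 2 + cos (phase (l + k) x) / 2 := by
    rw [phase_sub, phase_add, cos_sub, cos_add]; ring
  simp_rw [h]
  rw [integral_add (by exact (integrableOn_torusBox (by fun_prop)).div_const 2)
      (by exact (integrableOn_torusBox (by fun_prop)).div_const 2),
    integral_div, integral_div, integral_cos_phase, integral_cos_phase]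
  simp only [sub_eq_zero, add_eq_zero_iff_eq_neg]
  split_ifs <;> ring

lemma integral_sin_mul_sin (l k : ℤ × ℤ) :
    ∫ x in torusBox, sin (phase l x) * sin (phase k x) =
      (if l = k then 2 * π ^ 2 else 0) - (if l = -k then 2 * π ^ 2 else 0) := by
  have h (x : ℝ × ℝ) : sin (phase l x) * sin (phase k x) =
      cos (phase (l - k) x) / 2 - cos (phase (l + k) x) / 2 := by
    rw [phase_sub, phase_add, cos_sub, cos_add]; ring
  simp_rw [h]
  rw [integral_sub (by exact (integrableOn_torusBox (by fun_prop)).div_const 2)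
      (by exact (integrableOn_torusBox (by fun_prop)).div_const 2),
    integral_div, integral_div, integral_cos_phase, integral_cos_phase]
  simp only [sub_eq_zero, add_eq_zero_iff_eq_neg]
  split_ifs <;> ring

lemma integral_sin_mul_cos (l k : ℤ × ℤ) :
    ∫ x in torusBox, sin (phase l x) * cos (phase k x) = 0 := by
  have h (x : ℝ × ℝ) : sin (phase l x) * cos (phase k x) =
      sin (phase (l + k) x) / 2 + sin (phase (l - k) x) / 2 := by
    rw [phase_sub, phase_add, sin_sub, sin_add]; ring
  simp_rw [h]
  rw [integral_add (by exact (integrableOn_torusBox (by fun_prop)).div_const 2)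
      (by exact (integrableOn_torusBox (by fun_prop)).div_const 2),
    integral_div, integral_div, integral_sin_phase, integral_sin_phase]
  simp

lemma integral_cos_mul_sin (l k : ℤ × ℤ) :
    ∫ x in torusBox, cos (phase l x) * sin (phase k x) = 0 := by
  simp_rw [mul_comm (cos _)]
  exact integral_sin_mul_cos k l

section FourierCoefficients

variable (N : ℕ) (a b : ℤ × ℤ → ℝ)

lemma integral_trigPoly_mul {g : ℝ × ℝ → ℝ} (hg : Continuous g) :
    ∫ x in torusBox, trigPoly N a b x * g x = ∑ l ∈ freqBox N,
      (a l * (∫ x in torusBox, cos (phase l x) * g x) +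
        b l * ∫ x in torusBox, sin (phase l x) * g x) := by
  simp only [trigPoly, Finset.sum_mul]
  rw [integral_finsetSum _ fun l _ => integrableOn_torusBox (by fun_prop)]
  refine Finset.sum_congr rfl fun l _ => ?_
  rw [← integral_const_mul, ← integral_const_mul,
    ← integral_add (integrableOn_torusBox (by fun_prop)) (integrableOn_torusBox (by fun_prop))]
  congr 1
  ext x
  ring

lemma integral_trigPoly_mul_cos {k : ℤ × ℤ} (hk : k ∈ freqBox N) :
    ∫ x in torusBox, trigPoly N a b x * cos (phase k x) = 2 * π ^ 2 * (a k + a (-k)) := by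
  simp only [integral_trigPoly_mul N a b (g := fun x => cos (phase k x)) (by fun_prop),
    integral_cos_mul_cos, integral_sin_mul_cos, mul_zero, add_zero, mul_add, mul_ite,
    Finset.sum_add_distrib, Finset.sum_ite_eq', hk, neg_mem_freqBox hk, if_true]
  ring

lemma integral_trigPoly_mul_sin {k : ℤ × ℤ} (hk : k ∈ freqBox N) :
    ∫ x in torusBox, trigPoly N a b x * sin (phase k x) = 2 * π ^ 2 * (b k - b (-k)) := by
  simp only [integral_trigPoly_mul N a b (g := fun x => sin (phase k x)) (by fun_prop),
    integral_sin_mul_sin, integral_cos_mul_sin, mul_zero, zero_add, mul_sub, mul_ite,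
    Finset.sum_sub_distrib, Finset.sum_ite_eq', hk, neg_mem_freqBox hk, if_true]
  ring

lemma integral_trigPoly_sq :
    ∫ x in torusBox, trigPoly N a b x ^ 2 =
      π ^ 2 * ∑ k ∈ freqBox N, ((a k + a (-k)) ^ 2 + (b k - b (-k)) ^ 2) := by
  have hsymm : ∑ k ∈ freqBox N, ((a k + a (-k)) ^ 2 + (b k - b (-k)) ^ 2) =
      2 * ∑ k ∈ freqBox N, (a k * (a k + a (-k)) + b k * (b k - b (-k))) := by
    rw [two_mul]
    nth_rewrite 2 [← sum_freqBox_neg]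
    rw [← Finset.sum_add_distrib]
    exact Finset.sum_congr rfl fun k _ => by rw [neg_neg]; ring
  rw [hsymm]
  simp_rw [sq]
  rw [integral_trigPoly_mul N a b (continuous_trigPoly N a b), Finset.mul_sum, Finset.mul_sum]
  refine Finset.sum_congr rfl fun k hk => ?_
  simp_rw [mul_comm (cos _), mul_comm (sin _)]
  rw [integral_trigPoly_mul_cos N a b hk, integral_trigPoly_mul_sin N a b hk]
  ring

lemma H1sq_trigPoly :
    H1sq (trigPoly N a b) =
      π ^ 2 * ∑ k ∈ freqBox N, freqSq k * ((a k + a (-k)) ^ 2 + (b k - b (-k)) ^ 2) := by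
  rw [H1sq, pd1_trigPoly, pd2_trigPoly,
    integral_add (integrableOn_torusBox (by fun_prop)) (integrableOn_torusBox (by fun_prop)),
    integral_trigPoly_sq, integral_trigPoly_sq, ← mul_add, ← Finset.sum_add_distrib]
  congr 1
  refine Finset.sum_congr rfl fun k _ => ?_
  simp only [freqSq, Prod.fst_neg, Prod.snd_neg, Int.cast_neg]
  ring

end FourierCoefficients

lemma symm_coeff_eq_of_trigPoly_eq {N : ℕ} {a b a' b' : ℤ × ℤ → ℝ}
    (h : trigPoly N a b = trigPoly N a' b') {k : ℤ × ℤ} (hk : k ∈ freqBox N) :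
    a k + a (-k) = a' k + a' (-k) ∧ b k - b (-k) = b' k - b' (-k) := by
  have hπ : (2 * π ^ 2 : ℝ) ≠ 0 := by positivity
  have hc := integral_trigPoly_mul_cos N a b hk
  have hs := integral_trigPoly_mul_sin N a b hk
  rw [h, integral_trigPoly_mul_cos N a' b' hk] at hc
  rw [h, integral_trigPoly_mul_sin N a' b' hk] at hs
  exact ⟨(mul_left_cancel₀ hπ hc).symm, (mul_left_cancel₀ hπ hs).symm⟩

def TorusPeriodic {α : Type*} (f : ℝ × ℝ → α) : Prop :=
  Periodic f (2 * π, 0) ∧ Periodic f (0, 2 * π)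

lemma TorusPeriodic.mul {f g : ℝ × ℝ → ℝ} (hf : TorusPeriodic f) (hg : TorusPeriodic g) :
    TorusPeriodic (f * g) :=
  ⟨hf.1.mul hg.1, hf.2.mul hg.2⟩

lemma TorusPeriodic.comp {α β : Type*} {f : ℝ × ℝ → α} (hf : TorusPeriodic f) (φ : α → β) :
    TorusPeriodic (φ ∘ f) :=
  ⟨hf.1.comp φ, hf.2.comp φ⟩

lemma Function.Periodic.fderiv {E : Type*} [NormedAddCommGroup E] [NormedSpace ℝ E]
    {f : ℝ × ℝ → E} {c : ℝ × ℝ} (hf : Periodic f c) : Periodic (fderiv ℝ f) c := fun x => by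
  rw [← fderiv_comp_add_right, show (fun y => f (y + c)) = f from funext hf]

lemma TorusPeriodic.pd1 {f : ℝ × ℝ → ℝ} (hf : TorusPeriodic f) : TorusPeriodic (pd1 f) :=
  ⟨fun x => congrArg (· (1, 0)) (hf.1.fderiv x), fun x => congrArg (· (1, 0)) (hf.2.fderiv x)⟩

lemma TorusPeriodic.pd2 {f : ℝ × ℝ → ℝ} (hf : TorusPeriodic f) : TorusPeriodic (pd2 f) :=
  ⟨fun x => congrArg (· (0, 1)) (hf.1.fderiv x), fun x => congrArg (· (0, 1)) (hf.2.fderiv x)⟩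

lemma torusPeriodic_trigPoly (N : ℕ) (a b : ℤ × ℤ → ℝ) : TorusPeriodic (trigPoly N a b) := by
  constructor <;> intro x <;>
    simp [trigPoly, phase_apply, mul_add, ← add_assoc, add_right_comm _ (_ * (2 * π)),
      cos_add_int_mul_two_pi, sin_add_int_mul_two_pi]

lemma contDiff_pd1 {n : WithTop ℕ∞} {f : ℝ × ℝ → ℝ} (hf : ContDiff ℝ (n + 1) f) :
    ContDiff ℝ n (pd1 f) :=
  (hf.fderiv_right le_rfl).clm_apply contDiff_const

lemma contDiff_pd2 {n : WithTop ℕ∞} {f : ℝ × ℝ → ℝ} (hf : ContDiff ℝ (n + 1) f) :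
    ContDiff ℝ n (pd2 f) :=
  (hf.fderiv_right le_rfl).clm_apply contDiff_const

lemma continuous_pd1 {f : ℝ × ℝ → ℝ} (hf : ContDiff ℝ 1 f) : Continuous (pd1 f) :=
  (contDiff_pd1 (n := 0) hf).continuous

lemma continuous_pd2 {f : ℝ × ℝ → ℝ} (hf : ContDiff ℝ 1 f) : Continuous (pd2 f) :=
  (contDiff_pd2 (n := 0) hf).continuous

lemma pd1_mul {f g : ℝ × ℝ → ℝ} (hf : Differentiable ℝ f) (hg : Differentiable ℝ g)
    (x : ℝ × ℝ) :
    pd1 (fun y => f y * g y) x = pd1 f x * g x + f x * pd1 g x := by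
  simp only [pd1, fderiv_fun_mul (hf x) (hg x)]
  simp only [add_apply, smul_apply, smul_eq_mul]
  ring

lemma pd2_mul {f g : ℝ × ℝ → ℝ} (hf : Differentiable ℝ f) (hg : Differentiable ℝ g)
    (x : ℝ × ℝ) :
    pd2 (fun y => f y * g y) x = pd2 f x * g x + f x * pd2 g x := by
  simp only [pd2, fderiv_fun_mul (hf x) (hg x)]
  simp only [add_apply, smul_apply, smul_eq_mul]
  ring

-- The divergence theorem on `torusBox`, whose boundary terms cancel by periodicity.
lemma integral_pd1_add_pd2_eq_zero {f g : ℝ × ℝ → ℝ} (hf : ContDiff ℝ 1 f) (hg : ContDiff ℝ 1 g)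
    (hfp : Periodic f (2 * π, 0)) (hgp : Periodic g (0, 2 * π)) :
    ∫ x in torusBox, (pd1 f x + pd2 g x) = 0 := by
  have hdiv := integral_divergence_prod_Icc_of_hasFDerivAt_of_le f g (fderiv ℝ f) (fderiv ℝ g)
    (0, 0) (2 * π, 2 * π) (by simp [Prod.le_def, pi_pos.le]) hf.continuous.continuousOn
    hg.continuous.continuousOn (fun x _ => (hf.differentiable one_ne_zero x).hasFDerivAt)
    (fun x _ => (hg.differentiable one_ne_zero x).hasFDerivAt)
    (integrableOn_torusBox ((continuous_pd1 hf).add (continuous_pd2 hg)))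
  have hf0 (t : ℝ) : f (2 * π, t) = f (0, t) := by simpa using hfp (0, t)
  have hg0 (t : ℝ) : g (t, 2 * π) = g (t, 0) := by simpa using hgp (t, 0)
  simpa [torusBox, pd1, pd2, hf0, hg0] using hdiv

lemma integral_grad_mul_grad {g u : ℝ × ℝ → ℝ} (hg : ContDiff ℝ 1 g) (hu : ContDiff ℝ 2 u)
    (hgp : TorusPeriodic g) (hup : TorusPeriodic u) :
    ∫ x in torusBox, (pd1 g x * pd1 u x + pd2 g x * pd2 u x) = -∫ x in torusBox, g x * lap u x := by
  have hu1 : ContDiff ℝ 1 (pd1 u) := contDiff_pd1 hu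
  have hu2 : ContDiff ℝ 1 (pd2 u) := contDiff_pd2 hu
  have hgd : Differentiable ℝ g := hg.differentiable one_ne_zero
  have hgreen := integral_pd1_add_pd2_eq_zero (hg.mul hu1) (hg.mul hu2)
    (hgp.mul hup.pd1).1 (hgp.mul hup.pd2).2
  simp only [pd1_mul hgd (hu1.differentiable one_ne_zero),
    pd2_mul hgd (hu2.differentiable one_ne_zero)] at hgreen
  have hg1 := continuous_pd1 hg
  have hg2 := continuous_pd2 hg
  have hu11 := continuous_pd1 hu1
  have hu22 := continuous_pd2 hu2
  rw [eq_neg_iff_add_eq_zero, ← integral_add (integrableOn_torusBox (by fun_prop))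
    (integrableOn_torusBox (by simp only [lap]; fun_prop))]
  simpa only [lap, mul_add, add_add_add_comm] using hgreen

section FieldIntegrals

variable {α : Type*} [MeasurableSpace α] {μ : Measure α} {f₁ f₂ g₁ g₂ : α → ℝ}

lemma abs_integral_mul_add_mul_le
    (hf : Integrable (fun x => f₁ x ^ 2 + f₂ x ^ 2) μ)
    (hg : Integrable (fun x => g₁ x ^ 2 + g₂ x ^ 2) μ)
    (hfg : Integrable (fun x => f₁ x * g₁ x + f₂ x * g₂ x) μ) :
    |∫ x, (f₁ x * g₁ x + f₂ x * g₂ x) ∂μ| ≤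
      √(∫ x, (f₁ x ^ 2 + f₂ x ^ 2) ∂μ) * √(∫ x, (g₁ x ^ 2 + g₂ x ^ 2) ∂μ) := by
  set F := ∫ x, (f₁ x ^ 2 + f₂ x ^ 2) ∂μ
  set G := ∫ x, (g₁ x ^ 2 + g₂ x ^ 2) ∂μ
  set C := ∫ x, (f₁ x * g₁ x + f₂ x * g₂ x) ∂μ
  have hquad (t : ℝ) : 0 ≤ G * (t * t) + (-2 * C) * t + F := by
    have hexp : ∫ x, ((t * g₁ x - f₁ x) ^ 2 + (t * g₂ x - f₂ x) ^ 2) ∂μ =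
        G * (t * t) + (-2 * C) * t + F := by
      have hpt : (fun x => (t * g₁ x - f₁ x) ^ 2 + (t * g₂ x - f₂ x) ^ 2) = fun x =>
          (t * t) * (g₁ x ^ 2 + g₂ x ^ 2) + (-2 * t) * (f₁ x * g₁ x + f₂ x * g₂ x) +
            (f₁ x ^ 2 + f₂ x ^ 2) := by
        ext x; ring
      rw [hpt, integral_add _ hf, integral_add (hg.const_mul _) (hfg.const_mul _),
        integral_const_mul, integral_const_mul]
      · ring
      · exact (hg.const_mul _).add (hfg.const_mul _)
    exact hexp ▸ integral_nonneg fun x => by positivity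
  have hC : C ^ 2 ≤ F * G := by
    have := discrim_le_zero hquad
    rw [discrim] at this
    nlinarith
  rw [← Real.sqrt_mul (integral_nonneg fun x => by positivity)]
  exact Real.abs_le_sqrt hC

lemma sqrt_integral_sub_sq_le
    (hf : Integrable (fun x => f₁ x ^ 2 + f₂ x ^ 2) μ)
    (hg : Integrable (fun x => g₁ x ^ 2 + g₂ x ^ 2) μ)
    (hfg : Integrable (fun x => f₁ x * g₁ x + f₂ x * g₂ x) μ) :
    √(∫ x, ((f₁ x - g₁ x) ^ 2 + (f₂ x - g₂ x) ^ 2) ∂μ) ≤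
      √(∫ x, (f₁ x ^ 2 + f₂ x ^ 2) ∂μ) + √(∫ x, (g₁ x ^ 2 + g₂ x ^ 2) ∂μ) := by
  have hexp : ∫ x, ((f₁ x - g₁ x) ^ 2 + (f₂ x - g₂ x) ^ 2) ∂μ =
      ∫ x, (f₁ x ^ 2 + f₂ x ^ 2) ∂μ - 2 * ∫ x, (f₁ x * g₁ x + f₂ x * g₂ x) ∂μ +
        ∫ x, (g₁ x ^ 2 + g₂ x ^ 2) ∂μ := by
    have hpt : (fun x => (f₁ x - g₁ x) ^ 2 + (f₂ x - g₂ x) ^ 2) = fun x =>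
        (f₁ x ^ 2 + f₂ x ^ 2) - 2 * (f₁ x * g₁ x + f₂ x * g₂ x) + (g₁ x ^ 2 + g₂ x ^ 2) := by
      ext x; ring
    rw [hpt, integral_add _ hg, integral_sub hf (hfg.const_mul _), integral_const_mul]
    exact hf.sub (hfg.const_mul _)
  have hCS := neg_le_of_abs_le (abs_integral_mul_add_mul_le hf hg hfg)
  rw [Real.sqrt_le_left (by positivity), hexp]
  nlinarith [Real.sq_sqrt (integral_nonneg fun x => by positivity :
      0 ≤ ∫ x, (f₁ x ^ 2 + f₂ x ^ 2) ∂μ),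
    Real.sq_sqrt (integral_nonneg fun x => by positivity : 0 ≤ ∫ x, (g₁ x ^ 2 + g₂ x ^ 2) ∂μ)]

end FieldIntegrals

lemma H1sq_nonneg (u : ℝ × ℝ → ℝ) : 0 ≤ H1sq u :=
  integral_nonneg fun _ => by positivity

section GradientEstimates

variable {f g : ℝ × ℝ → ℝ}

lemma sqrt_H1sq_sub_le (hf : ContDiff ℝ 1 f) (hg : ContDiff ℝ 1 g) :
    √(H1sq (f - g)) ≤ √(H1sq f) + √(H1sq g) := by
  have hf1 := continuous_pd1 hf
  have hf2 := continuous_pd2 hf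
  have hg1 := continuous_pd1 hg
  have hg2 := continuous_pd2 hg
  have hsub (v : ℝ × ℝ) (x : ℝ × ℝ) : fderiv ℝ (f - g) x v = fderiv ℝ f x v - fderiv ℝ g x v := by
    rw [fderiv_sub (hf.differentiable one_ne_zero x) (hg.differentiable one_ne_zero x)]
    rfl
  simp only [H1sq, pd1, pd2, hsub]
  exact sqrt_integral_sub_sq_le (integrableOn_torusBox (by fun_prop))
    (integrableOn_torusBox (by fun_prop)) (integrableOn_torusBox (by fun_prop))

lemma sqrt_H1sq_le_of_integral_sub_mul_lap_eq_zero (hf : ContDiff ℝ 2 f) (hfp : TorusPeriodic f)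
    (hg : ContDiff ℝ 1 g) (hgp : TorusPeriodic g)
    (horth : ∫ x in torusBox, (f x - g x) * lap f x = 0) :
    √(H1sq f) ≤ √(H1sq g) := by
  have hf' : ContDiff ℝ 1 f := hf.of_le (by norm_num)
  have hlap : Continuous (lap f) :=
    (continuous_pd1 (contDiff_pd1 hf)).add (continuous_pd2 (contDiff_pd2 hf))
  have hf1 := continuous_pd1 hf'
  have hf2 := continuous_pd2 hf'
  have hg1 := continuous_pd1 hg
  have hg2 := continuous_pd2 hg
  have hcf := hf'.continuous
  have hcg := hg.continuous
  have hfg : ∫ x in torusBox, f x * lap f x = ∫ x in torusBox, g x * lap f x := by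
    rw [← sub_eq_zero, ← integral_sub (integrableOn_torusBox (by fun_prop))
      (integrableOn_torusBox (by fun_prop))]
    simpa only [sub_mul] using horth
  have hH1 : H1sq f = ∫ x in torusBox, (pd1 g x * pd1 f x + pd2 g x * pd2 f x) :=
    calc H1sq f = -∫ x in torusBox, f x * lap f x := by
          simp only [H1sq, sq, integral_grad_mul_grad hf' hf hfp hfp]
      _ = -∫ x in torusBox, g x * lap f x := by rw [hfg]
      _ = _ := (integral_grad_mul_grad hg hf hgp hfp).symm
  have hCS : H1sq f ≤ √(H1sq g) * √(H1sq f) :=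
    calc H1sq f ≤ |∫ x in torusBox, (pd1 g x * pd1 f x + pd2 g x * pd2 f x)| :=
          hH1.trans_le (le_abs_self _)
      _ ≤ √(H1sq g) * √(H1sq f) :=
          abs_integral_mul_add_mul_le (integrableOn_torusBox (by fun_prop))
            (integrableOn_torusBox (by fun_prop)) (integrableOn_torusBox (by fun_prop))
  nlinarith [Real.mul_self_sqrt (H1sq_nonneg f), Real.sqrt_nonneg (H1sq f),
    Real.sqrt_nonneg (H1sq g)]

end GradientEstimates

lemma sqrt_H1sq_comp_le {u : ℝ × ℝ → ℝ} {φ φ' : ℝ → ℝ} (hφ : ∀ t, HasDerivAt φ (φ' t) t)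
    (hu : Differentiable ℝ u) (hint : IntegrableOn (fun x => pd1 u x ^ 2 + pd2 u x ^ 2) torusBox)
    {K : ℝ} (hK : ∀ x, |φ' (u x)| ≤ K) :
    √(H1sq (φ ∘ u)) ≤ K * √(H1sq u) := by
  have hK0 : 0 ≤ K := (abs_nonneg _).trans (hK 0)
  have hchain (v x : ℝ × ℝ) : fderiv ℝ (φ ∘ u) x v = φ' (u x) * fderiv ℝ u x v := by
    rw [((hφ (u x)).comp_hasFDerivAt x (hu x).hasFDerivAt).fderiv]
    rfl
  have hle : H1sq (φ ∘ u) ≤ K ^ 2 * H1sq u := by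
    rw [H1sq, H1sq, ← integral_const_mul]
    refine integral_mono_of_nonneg (ae_of_all _ fun x => by positivity) (hint.const_mul _)
      (ae_of_all _ fun x => ?_)
    have hφ'K : φ' (u x) ^ 2 ≤ K ^ 2 := sq_le_sq' (abs_le.1 (hK x)).1 (abs_le.1 (hK x)).2
    simp only [pd1, pd2, hchain]
    nlinarith [sq_nonneg (fderiv ℝ u x (1, 0)), sq_nonneg (fderiv ℝ u x (0, 1))]
  calc √(H1sq (φ ∘ u)) ≤ √(K ^ 2 * H1sq u) := Real.sqrt_le_sqrt hle
    _ = K * √(H1sq u) := by rw [Real.sqrt_mul (sq_nonneg K), Real.sqrt_sq hK0]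

lemma sqrt_H1sq_cube_sub_trigPoly_le (N : ℕ) (a b : ℤ × ℤ → ℝ) :
    √(H1sq (fun x => trigPoly N a b x ^ 3 - trigPoly N a b x)) ≤
      (3 * Linf (trigPoly N a b) ^ 2 + 1) * √(H1sq (trigPoly N a b)) := by
  refine sqrt_H1sq_comp_le (φ := fun t => t ^ 3 - t) (φ' := fun t => 3 * t ^ 2 - 1)
    (fun t => by simpa using (hasDerivAt_pow 3 t).fun_sub (hasDerivAt_id' t))
    (contDiff_trigPoly N a b).differentiable_one ?_ fun x => ?_
  · rw [pd1_trigPoly, pd2_trigPoly]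
    exact integrableOn_torusBox (by fun_prop)
  · have hx := abs_le.1 (abs_trigPoly_le_Linf N a b x)
    have hx2 : trigPoly N a b x ^ 2 ≤ Linf (trigPoly N a b) ^ 2 := sq_le_sq' hx.1 hx.2
    rw [abs_le]
    constructor <;> nlinarith [sq_nonneg (trigPoly N a b x)]

lemma sqrt_H1sq_trigPoly_mul_le (N : ℕ) (a b : ℤ × ℤ → ℝ) {μ : ℤ × ℤ → ℝ}
    (hμ : ∀ k, μ (-k) = μ k) {C : ℝ} (hC : ∀ k, |μ k| ≤ C) :
    √(H1sq (trigPoly N (μ * a) (μ * b))) ≤ C * √(H1sq (trigPoly N a b)) := by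
  have hC0 : 0 ≤ C := (abs_nonneg _).trans (hC 0)
  have hle : H1sq (trigPoly N (μ * a) (μ * b)) ≤ C ^ 2 * H1sq (trigPoly N a b) := by
    rw [H1sq_trigPoly, H1sq_trigPoly, mul_left_comm, Finset.mul_sum (a := C ^ 2)]
    refine mul_le_mul_of_nonneg_left (Finset.sum_le_sum fun k _ => ?_) (sq_nonneg π)
    have hμC : μ k ^ 2 ≤ C ^ 2 := sq_le_sq' (abs_le.1 (hC k)).1 (abs_le.1 (hC k)).2
    have hsymm : ((μ * a) k + (μ * a) (-k)) ^ 2 + ((μ * b) k - (μ * b) (-k)) ^ 2 =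
        μ k ^ 2 * ((a k + a (-k)) ^ 2 + (b k - b (-k)) ^ 2) := by
      simp only [Pi.mul_apply, hμ]; ring
    rw [hsymm, mul_left_comm]
    exact mul_le_mul_of_nonneg_right hμC (by have := freqSq_nonneg k; positivity)
  calc √(H1sq (trigPoly N (μ * a) (μ * b))) ≤ √(C ^ 2 * H1sq (trigPoly N a b)) :=
        Real.sqrt_le_sqrt hle
    _ = C * √(H1sq (trigPoly N a b)) := by rw [Real.sqrt_mul (sq_nonneg C), Real.sqrt_sq hC0]

lemma trigPoly_eq_of_mul_eq {N : ℕ} {μ a b a' b' : ℤ × ℤ → ℝ} (hμ : ∀ k, μ (-k) = μ k)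
    (hμ0 : ∀ k, μ k ≠ 0) (h : trigPoly N (μ * a) (μ * b) = trigPoly N (μ * a') (μ * b')) :
    trigPoly N a b = trigPoly N a' b' := by
  refine trigPoly_congr_symm (fun k hk => ?_) (fun k hk => ?_)
  · refine mul_left_cancel₀ (hμ0 k) ?_
    simpa only [Pi.mul_apply, hμ, mul_add] using (symm_coeff_eq_of_trigPoly_eq h hk).1
  · refine mul_left_cancel₀ (hμ0 k) ?_
    simpa only [Pi.mul_apply, hμ, mul_sub] using (symm_coeff_eq_of_trigPoly_eq h hk).2

-- The Fourier symbol of `1 + ντΔ² - AτΔ`: `Δ` acts on the mode `k` as multiplication by `-|k|²`.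
def schemeSymbol (ν τ A : ℝ) (k : ℤ × ℤ) : ℝ := 1 + ν * τ * freqSq k ^ 2 + A * τ * freqSq k

def propagatorSymbol (ν τ A : ℝ) (k : ℤ × ℤ) : ℝ := (1 + A * τ * freqSq k) / schemeSymbol ν τ A k

def forcingSymbol (ν τ A : ℝ) (k : ℤ × ℤ) : ℝ := τ * freqSq k / schemeSymbol ν τ A k

section Symbols

variable {ν τ A : ℝ}

lemma schemeSymbol_neg (k : ℤ × ℤ) : schemeSymbol ν τ A (-k) = schemeSymbol ν τ A k := by
  simp [schemeSymbol, freqSq_neg]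

lemma propagatorSymbol_neg (k : ℤ × ℤ) :
    propagatorSymbol ν τ A (-k) = propagatorSymbol ν τ A k := by
  simp [propagatorSymbol, schemeSymbol_neg, freqSq_neg]

lemma forcingSymbol_neg (k : ℤ × ℤ) : forcingSymbol ν τ A (-k) = forcingSymbol ν τ A k := by
  simp [forcingSymbol, schemeSymbol_neg, freqSq_neg]

lemma one_le_schemeSymbol (hν : 0 ≤ ν) (hτ : 0 ≤ τ) (hA : 0 ≤ A) (k : ℤ × ℤ) :
    1 ≤ schemeSymbol ν τ A k := by
  have := freqSq_nonneg k
  unfold schemeSymbol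
  nlinarith [mul_nonneg (mul_nonneg hν hτ) (sq_nonneg (freqSq k)),
    mul_nonneg (mul_nonneg hA hτ) this]

lemma abs_propagatorSymbol_le_one (hν : 0 ≤ ν) (hτ : 0 ≤ τ) (hA : 0 ≤ A) (k : ℤ × ℤ) :
    |propagatorSymbol ν τ A k| ≤ 1 := by
  have hS := one_le_schemeSymbol hν hτ hA k
  have hk := mul_nonneg (mul_nonneg hA hτ) (freqSq_nonneg k)
  rw [propagatorSymbol, abs_div, abs_of_pos (by linarith), abs_of_nonneg (by linarith),
    div_le_one (by linarith), schemeSymbol]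
  nlinarith [mul_nonneg (mul_nonneg hν hτ) (sq_nonneg (freqSq k))]

lemma abs_forcingSymbol_le (hν : 0 ≤ ν) (hτ : 0 ≤ τ) (hA : 0 < A) (k : ℤ × ℤ) :
    |forcingSymbol ν τ A k| ≤ 1 / A := by
  have hS := one_le_schemeSymbol hν hτ hA.le k
  have hk := mul_nonneg hτ (freqSq_nonneg k)
  rw [forcingSymbol, abs_div, abs_of_nonneg hk, abs_of_pos (by linarith),
    div_le_div_iff₀ (by linarith) hA, schemeSymbol]
  nlinarith [mul_nonneg (mul_nonneg hν hτ) (sq_nonneg (freqSq k))]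

end Symbols

section Scheme

variable {N : ℕ} {ν τ A : ℝ} {p q r s c d : ℤ × ℤ → ℝ}

lemma trigPoly_schemeSymbol_mul (hτ : τ ≠ 0)
    (hscheme : ∀ x : ℝ × ℝ, (trigPoly N r s x - trigPoly N p q x) / τ =
      -ν * lap (lap (trigPoly N r s)) x +
        A * lap (fun y => trigPoly N r s y - trigPoly N p q y) x + lap (trigPoly N c d) x) :
    trigPoly N (schemeSymbol ν τ A * r) (schemeSymbol ν τ A * s) =
      trigPoly N (fun k => (1 + A * τ * freqSq k) * p k - τ * freqSq k * c k)
        (fun k => (1 + A * τ * freqSq k) * q k - τ * freqSq k * d k) := by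
  ext x
  have h := hscheme x
  rw [div_eq_iff hτ, show (fun y => trigPoly N r s y - trigPoly N p q y) =
    trigPoly N (r - p) (s - q) from (trigPoly_sub N r s p q).symm] at h
  simp only [lap_trigPoly] at h
  rw [← sub_eq_zero]
  refine Eq.trans ?_ (sub_eq_zero.2 h)
  simp only [trigPoly, Finset.mul_sum, Finset.sum_mul, ← Finset.sum_sub_distrib,
    ← Finset.sum_add_distrib]
  refine Finset.sum_congr rfl fun k _ => ?_
  simp only [Pi.mul_apply, Pi.sub_apply, schemeSymbol]
  ring

lemma trigPoly_scheme_eq (hν : 0 ≤ ν) (hτ : 0 < τ) (hA : 0 ≤ A)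
    (hscheme : ∀ x : ℝ × ℝ, (trigPoly N r s x - trigPoly N p q x) / τ =
      -ν * lap (lap (trigPoly N r s)) x +
        A * lap (fun y => trigPoly N r s y - trigPoly N p q y) x + lap (trigPoly N c d) x) :
    trigPoly N r s = trigPoly N (propagatorSymbol ν τ A * p) (propagatorSymbol ν τ A * q) -
      trigPoly N (forcingSymbol ν τ A * c) (forcingSymbol ν τ A * d) := by
  have hS (k : ℤ × ℤ) : schemeSymbol ν τ A k ≠ 0 :=
    (zero_lt_one.trans_le (one_le_schemeSymbol hν hτ.le hA k)).ne'
  rw [← trigPoly_sub]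
  refine trigPoly_eq_of_mul_eq schemeSymbol_neg hS ?_
  rw [trigPoly_schemeSymbol_mul hτ.ne' hscheme]
  congr 1 <;> ext k <;>
    simp only [Pi.mul_apply, Pi.sub_apply, propagatorSymbol, forcingSymbol] <;>
    field_simp [hS k]

end Scheme

theorem CH_one_step_H1_bound_general (ν τ A : ℝ) (hν : 0 < ν) (hτ : 0 < τ) (hA : 1 ≤ A)
    (N : ℕ) (un un1 w : ℝ × ℝ → ℝ)
    (hun : IsTrigPoly N un) (hun1 : IsTrigPoly N un1) (hw : IsTrigPoly N w)
    -- `w = Π_N f(u^n)`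
    (hproj : ∀ v : ℝ × ℝ → ℝ, IsTrigPoly N v →
      ∫ x in torusBox, (w x - ((un x) ^ 3 - un x)) * v x = 0)
    -- the scheme
    (hscheme : ∀ x : ℝ × ℝ, (un1 x - un x) / τ =
      -ν * lap (lap un1) x + A * lap (fun y => un1 y - un y) x + lap w x) :
    Real.sqrt (H1sq un1) ≤
      (1 + 1 / A + (3 / A) * (Linf un) ^ 2) * Real.sqrt (H1sq un) := by
  have hA0 : 0 < A := one_pos.trans_le hA
  obtain ⟨p, q, -, rfl⟩ := hun.exists_eq_trigPoly
  obtain ⟨r, s, -, rfl⟩ := hun1.exists_eq_trigPoly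
  have horth := hproj _ hw.lap
  obtain ⟨c, d, -, rfl⟩ := hw.exists_eq_trigPoly
  have hproj_le : √(H1sq (trigPoly N c d)) ≤
      √(H1sq (fun x => trigPoly N p q x ^ 3 - trigPoly N p q x)) :=
    sqrt_H1sq_le_of_integral_sub_mul_lap_eq_zero (contDiff_trigPoly N c d)
      (torusPeriodic_trigPoly N c d) (by fun_prop)
      ((torusPeriodic_trigPoly N p q).comp fun t => t ^ 3 - t) horth
  calc √(H1sq (trigPoly N r s))
      ≤ √(H1sq (trigPoly N (propagatorSymbol ν τ A * p) (propagatorSymbol ν τ A * q))) +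
          √(H1sq (trigPoly N (forcingSymbol ν τ A * c) (forcingSymbol ν τ A * d))) := by
        rw [trigPoly_scheme_eq hν.le hτ hA0.le hscheme]
        exact sqrt_H1sq_sub_le (contDiff_trigPoly _ _ _) (contDiff_trigPoly _ _ _)
    _ ≤ 1 * √(H1sq (trigPoly N p q)) + 1 / A * √(H1sq (trigPoly N c d)) :=
        add_le_add
          (sqrt_H1sq_trigPoly_mul_le N p q propagatorSymbol_neg
            (abs_propagatorSymbol_le_one hν.le hτ.le hA0.le))
          (sqrt_H1sq_trigPoly_mul_le N c d forcingSymbol_neg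
            (abs_forcingSymbol_le hν.le hτ.le hA0))
    _ ≤ 1 * √(H1sq (trigPoly N p q)) +
          1 / A * ((3 * Linf (trigPoly N p q) ^ 2 + 1) * √(H1sq (trigPoly N p q))) := by
        gcongr
        exact hproj_le.trans (sqrt_H1sq_cube_sub_trigPoly_le N p q)
    _ = (1 + 1 / A + 3 / A * Linf (trigPoly N p q) ^ 2) * √(H1sq (trigPoly N p q)) := by ring

/-- `Ḣ¹` bound for one step of the stabilized semi-implicit Cahn–Hilliard scheme
`u^{n+1} = (1-AτΔ)(1+ντΔ²-AτΔ)⁻¹u^n + τΔΠ_N(1+ντΔ²-AτΔ)⁻¹f(u^n)`, i.e.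
`(u^{n+1}-u^n)/τ = -νΔ²u^{n+1} + AΔ(u^{n+1}-u^n) + ΔΠ_N f(u^n)`, `f(u)=u³-u`:
`‖u^{n+1}‖_{Ḣ¹} ≤ (1 + 1/A + (3/A)‖u^n‖_∞²)·‖u^n‖_{Ḣ¹}`. -/
theorem CH_one_step_H1_bound (ν τ A : ℝ) (hν : 0 < ν) (hτ : 0 < τ) (hA : 1 ≤ A)
    (N : ℕ) (un un1 w : ℝ × ℝ → ℝ)
    (hun : IsTrigPoly N un) (hun1 : IsTrigPoly N un1) (hw : IsTrigPoly N w)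
    (hmean : ∫ x in torusBox, un x = 0) (hmean1 : ∫ x in torusBox, un1 x = 0)
    -- `w = Π_N f(u^n)`
    (hproj : ∀ v : ℝ × ℝ → ℝ, IsTrigPoly N v →
      ∫ x in torusBox, (w x - ((un x) ^ 3 - un x)) * v x = 0)
    -- the scheme
    (hscheme : ∀ x : ℝ × ℝ, (un1 x - un x) / τ =
      -ν * lap (lap un1) x + A * lap (fun y => un1 y - un y) x + lap w x) :
    Real.sqrt (H1sq un1) ≤
      (1 + 1 / A + (3 / A) * (Linf un) ^ 2) * Real.sqrt (H1sq un) :=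
  CH_one_step_H1_bound_general ν τ A hν hτ hA N un un1 w hun hun1 hw hproj hscheme

end
end

section
/- Let u^n, u^{n+1} ∈ X_N be mean-zero trigonometric polynomials satisfying (u^{n+1}-u^n)/τ = -νΔ²u^{n+1} + AΔ(u^{n+1}-u^n) + ΔΠ_N f(u^n), with f(u)=u³-u. Then with E(u) = ∫_{𝕋²}((ν/2)|∇u|² + (1/4)(u²-1)²)dx, E(u^{n+1}) - E(u^n) + (A + 1/2 + √(2ν/τ))||u^{n+1}-u^n||₂² ≤ ||u^{n+1}-u^n||₂² · (||u^n||_∞² + (1/2)||u^{n+1}||_∞²). -/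
open MeasureTheory

noncomputable section

/-!
The scheme says `(uⁿ⁺¹ - uⁿ)/τ = Δμ` for the discrete chemical potential
`μ = -νΔuⁿ⁺¹ + A(uⁿ⁺¹ - uⁿ) + Π_N f(uⁿ)`, so up to a constant `-τμ` is `(-Δ)⁻¹(uⁿ⁺¹ - uⁿ)`.
All functions involved are smooth and `2π`-periodic, so Green's formula on the periodicity cell has
no boundary terms. Writing `v = uⁿ⁺¹ - uⁿ`, testing `v = τΔμ` with `μ` gives
`-τ‖∇μ‖² = ∫ μ v = ν(∇uⁿ⁺¹, ∇v) + A‖v‖² + (f(uⁿ), v)`, where `Π_N` drops out because `v ∈ X_N`.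
The gradient part of the energy changes by `ν(∇uⁿ⁺¹, ∇v) - (ν/2)‖∇v‖²`, the double-well part by at
most `(f(uⁿ), v) + (‖uⁿ‖²_∞ + ½‖uⁿ⁺¹‖²_∞ - ½)‖v‖²`, and by AM-GM
`√(2ν/τ)‖v‖² = -√(2ν/τ) τ(∇μ, ∇v) ≤ τ‖∇μ‖² + (ν/2)‖∇v‖²`. Adding up, everything but the
`L^∞` term cancels.
-/

open Real Set
open scoped ContDiff

section Calculus

variable {u v : ℝ × ℝ → ℝ}

theorem ContDiff.contDiff_pd1 {n m : WithTop ℕ∞} (hu : ContDiff ℝ n u) (hmn : m + 1 ≤ n) :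
    ContDiff ℝ m (pd1 u) :=
  (hu.fderiv_right hmn).clm_apply contDiff_const

theorem ContDiff.contDiff_pd2 {n m : WithTop ℕ∞} (hu : ContDiff ℝ n u) (hmn : m + 1 ≤ n) :
    ContDiff ℝ m (pd2 u) :=
  (hu.fderiv_right hmn).clm_apply contDiff_const

theorem ContDiff.differentiable_pd1 (hu : ContDiff ℝ 2 u) : Differentiable ℝ (pd1 u) :=
  (hu.contDiff_pd1 (m := 1) le_rfl).differentiable one_ne_zero

theorem ContDiff.differentiable_pd2 (hu : ContDiff ℝ 2 u) : Differentiable ℝ (pd2 u) :=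
  (hu.contDiff_pd2 (m := 1) le_rfl).differentiable one_ne_zero

theorem pd1_add (hu : Differentiable ℝ u) (hv : Differentiable ℝ v) :
    pd1 (fun x => u x + v x) = fun x => pd1 u x + pd1 v x := by
  funext x; simp [pd1, fderiv_fun_add (hu x) (hv x)]

theorem pd2_add (hu : Differentiable ℝ u) (hv : Differentiable ℝ v) :
    pd2 (fun x => u x + v x) = fun x => pd2 u x + pd2 v x := by
  funext x; simp [pd2, fderiv_fun_add (hu x) (hv x)]

theorem pd1_sub (hu : Differentiable ℝ u) (hv : Differentiable ℝ v) :
    pd1 (fun x => u x - v x) = fun x => pd1 u x - pd1 v x := by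
  funext x; simp [pd1, fderiv_fun_sub (hu x) (hv x)]

theorem pd2_sub (hu : Differentiable ℝ u) (hv : Differentiable ℝ v) :
    pd2 (fun x => u x - v x) = fun x => pd2 u x - pd2 v x := by
  funext x; simp [pd2, fderiv_fun_sub (hu x) (hv x)]

theorem pd1_const_mul (hu : Differentiable ℝ u) (c : ℝ) :
    pd1 (fun x => c * u x) = fun x => c * pd1 u x := by
  funext x; simp [pd1, fderiv_const_mul (hu x)]

theorem pd2_const_mul (hu : Differentiable ℝ u) (c : ℝ) :
    pd2 (fun x => c * u x) = fun x => c * pd2 u x := by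
  funext x; simp [pd2, fderiv_const_mul (hu x)]

theorem pd1_mul_s12 (hu : Differentiable ℝ u) (hv : Differentiable ℝ v) :
    pd1 (fun x => u x * v x) = fun x => pd1 u x * v x + u x * pd1 v x := by
  funext x; simp [pd1, fderiv_fun_mul (hu x) (hv x)]; ring

theorem pd2_mul_s12 (hu : Differentiable ℝ u) (hv : Differentiable ℝ v) :
    pd2 (fun x => u x * v x) = fun x => pd2 u x * v x + u x * pd2 v x := by
  funext x; simp [pd2, fderiv_fun_mul (hu x) (hv x)]; ring

theorem lap_add (hu : ContDiff ℝ 2 u) (hv : ContDiff ℝ 2 v) :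
    lap (fun x => u x + v x) = fun x => lap u x + lap v x := by
  have hu₁ := hu.differentiable two_ne_zero
  have hv₁ := hv.differentiable two_ne_zero
  funext x
  simp only [lap, pd1_add hu₁ hv₁, pd2_add hu₁ hv₁,
    pd1_add hu.differentiable_pd1 hv.differentiable_pd1,
    pd2_add hu.differentiable_pd2 hv.differentiable_pd2]
  ring

theorem lap_const_mul (hu : ContDiff ℝ 2 u) (c : ℝ) :
    lap (fun x => c * u x) = fun x => c * lap u x := by
  have hu₁ := hu.differentiable two_ne_zero
  funext x
  simp only [lap, pd1_const_mul hu₁, pd2_const_mul hu₁, pd1_const_mul hu.differentiable_pd1,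
    pd2_const_mul hu.differentiable_pd2]
  ring

end Calculus

structure SmoothPeriodic (u : ℝ × ℝ → ℝ) : Prop where
  contDiff : ContDiff ℝ ∞ u
  periodic_fst : Function.Periodic u (2 * π, 0)
  periodic_snd : Function.Periodic u (0, 2 * π)

namespace SmoothPeriodic

variable {u v : ℝ × ℝ → ℝ}

theorem contDiff_nat (hu : SmoothPeriodic u) (n : ℕ) : ContDiff ℝ n u :=
  hu.contDiff.of_le (by exact_mod_cast le_top)

theorem continuous (hu : SmoothPeriodic u) : Continuous u := hu.contDiff.continuous

theorem differentiable (hu : SmoothPeriodic u) : Differentiable ℝ u :=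
  hu.contDiff.differentiable (by simp)

theorem add (hu : SmoothPeriodic u) (hv : SmoothPeriodic v) :
    SmoothPeriodic fun x => u x + v x :=
  ⟨hu.contDiff.add hv.contDiff, hu.periodic_fst.add hv.periodic_fst,
    hu.periodic_snd.add hv.periodic_snd⟩

theorem sub (hu : SmoothPeriodic u) (hv : SmoothPeriodic v) :
    SmoothPeriodic fun x => u x - v x :=
  ⟨hu.contDiff.sub hv.contDiff, hu.periodic_fst.sub hv.periodic_fst,
    hu.periodic_snd.sub hv.periodic_snd⟩

theorem mul (hu : SmoothPeriodic u) (hv : SmoothPeriodic v) :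
    SmoothPeriodic fun x => u x * v x :=
  ⟨hu.contDiff.mul hv.contDiff, hu.periodic_fst.mul hv.periodic_fst,
    hu.periodic_snd.mul hv.periodic_snd⟩

theorem const_mul (hu : SmoothPeriodic u) (c : ℝ) : SmoothPeriodic fun x => c * u x :=
  ⟨contDiff_const.mul hu.contDiff, hu.periodic_fst.comp (c * ·), hu.periodic_snd.comp (c * ·)⟩

theorem fderiv_apply (hu : SmoothPeriodic u) (e : ℝ × ℝ) :
    SmoothPeriodic fun x => fderiv ℝ u x e := by
  have hper : ∀ c, Function.Periodic u c → Function.Periodic (fun x => fderiv ℝ u x e) c :=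
    fun c hc x => by
      change fderiv ℝ u (x + c) e = fderiv ℝ u x e
      rw [← fderiv_comp_add_right, show (fun y => u (y + c)) = u from funext hc]
  exact ⟨(hu.contDiff.fderiv_right le_rfl).clm_apply contDiff_const,
    hper _ hu.periodic_fst, hper _ hu.periodic_snd⟩

theorem pd1 (hu : SmoothPeriodic u) : SmoothPeriodic (pd1 u) := hu.fderiv_apply (1, 0)

theorem pd2 (hu : SmoothPeriodic u) : SmoothPeriodic (pd2 u) := hu.fderiv_apply (0, 1)

theorem lap (hu : SmoothPeriodic u) : SmoothPeriodic (lap u) := hu.pd1.pd1.add hu.pd2.pd2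

end SmoothPeriodic

section TrigPoly

variable {N : ℕ} {u v : ℝ × ℝ → ℝ}

theorem IsTrigPoly.smoothPeriodic (hu : IsTrigPoly N u) : SmoothPeriodic u := by
  obtain ⟨a, b, -, hu⟩ := hu
  rw [show u = _ from funext hu]
  refine ⟨by fun_prop, fun x => ?_, fun x => ?_⟩ <;> refine Finset.sum_congr rfl fun k _ => ?_
  · rw [Prod.fst_add, Prod.snd_add, add_zero, show (k.1 : ℝ) * (x.1 + 2 * π) + k.2 * x.2
      = k.1 * x.1 + k.2 * x.2 + k.1 * (2 * π) by ring, cos_add_int_mul_two_pi,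
      sin_add_int_mul_two_pi]
  · rw [Prod.fst_add, Prod.snd_add, add_zero, show (k.1 : ℝ) * x.1 + k.2 * (x.2 + 2 * π)
      = k.1 * x.1 + k.2 * x.2 + k.2 * (2 * π) by ring, cos_add_int_mul_two_pi,
      sin_add_int_mul_two_pi]

theorem IsTrigPoly.sub (hu : IsTrigPoly N u) (hv : IsTrigPoly N v) :
    IsTrigPoly N fun x => u x - v x := by
  obtain ⟨a, b, hab, hu⟩ := hu
  obtain ⟨a', b', hab', hv⟩ := hv
  refine ⟨a - a', b - b', fun k hk => ?_, fun x => ?_⟩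
  · simp [(hab k hk).1, (hab k hk).2, (hab' k hk).1, (hab' k hk).2]
  · change u x - v x = _
    rw [hu, hv, ← Finset.sum_sub_distrib]
    simp only [Pi.sub_apply]
    exact Finset.sum_congr rfl fun k _ => by ring

theorem IsTrigPoly.abs_le_Linf (hu : IsTrigPoly N u) (x : ℝ × ℝ) : |u x| ≤ Linf u := by
  obtain ⟨a, b, -, hu⟩ := hu
  refine le_ciSup (f := fun y => |u y|)
    ⟨∑ k ∈ Finset.Icc (-(N : ℤ), -(N : ℤ)) (N, N), (|a k| + |b k|), ?_⟩ x
  rintro _ ⟨y, rfl⟩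
  change |u y| ≤ _
  rw [hu y]
  refine (Finset.abs_sum_le_sum_abs _ _).trans (Finset.sum_le_sum fun k _ => ?_)
  refine (abs_add_le _ _).trans (add_le_add ?_ ?_) <;> rw [abs_mul]
  · exact mul_le_of_le_one_right (abs_nonneg _) (abs_cos_le_one _)
  · exact mul_le_of_le_one_right (abs_nonneg _) (abs_sin_le_one _)

end TrigPoly

section Integration

theorem Continuous.integrableOn_torusBox {F : ℝ × ℝ → ℝ} (hF : Continuous F) :
    IntegrableOn F torusBox :=
  hF.integrableOn_Icc

theorem torusBox_eq_prod : torusBox = Icc 0 (2 * π) ×ˢ Icc 0 (2 * π) := Icc_prod_eq _ _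

theorem integral_Icc_eq_zero_of_hasDerivAt_of_periodic {g g' : ℝ → ℝ} {T : ℝ} (hT : 0 ≤ T)
    (hg : ∀ t, HasDerivAt g (g' t) t) (hg' : Continuous g') (hper : Function.Periodic g T) :
    ∫ t in Icc 0 T, g' t = 0 := by
  rw [integral_Icc_eq_integral_Ioc, ← intervalIntegral.integral_of_le hT,
    intervalIntegral.integral_eq_sub_of_hasDerivAt (fun t _ => hg t) (hg'.intervalIntegrable _ _),
    ← zero_add T, hper, sub_self]

variable {u : ℝ × ℝ → ℝ}

theorem integral_pd1_eq_zero (hu : ContDiff ℝ 1 u) (hper : Function.Periodic u (2 * π, 0)) :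
    ∫ x in torusBox, pd1 u x = 0 := by
  have hcont := (hu.contDiff_pd1 (m := 0) le_rfl).continuous
  have hslice : ∀ y, ∫ x in Icc 0 (2 * π), pd1 u (x, y) = 0 := fun y =>
    integral_Icc_eq_zero_of_hasDerivAt_of_periodic two_pi_pos.le
      (fun x => by
        simpa [pd1] using ((hu.differentiable one_ne_zero) (x, y)).hasFDerivAt.comp_hasDerivAt x
          ((hasDerivAt_id x).prodMk (hasDerivAt_const x y)))
      (hcont.comp (by fun_prop)) (fun x => by simpa using hper (x, y))
  have hint := hcont.integrableOn_torusBox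
  rw [torusBox_eq_prod, Measure.volume_eq_prod] at hint ⊢
  rw [← setIntegral_prod_swap, ← Function.comp_def (pd1 u), setIntegral_prod _ hint.swap]
  simp [hslice]

theorem integral_pd2_eq_zero (hu : ContDiff ℝ 1 u) (hper : Function.Periodic u (0, 2 * π)) :
    ∫ x in torusBox, pd2 u x = 0 := by
  have hcont := (hu.contDiff_pd2 (m := 0) le_rfl).continuous
  have hslice : ∀ x, ∫ y in Icc 0 (2 * π), pd2 u (x, y) = 0 := fun x =>
    integral_Icc_eq_zero_of_hasDerivAt_of_periodic two_pi_pos.le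
      (fun y => by
        simpa [pd2] using ((hu.differentiable one_ne_zero) (x, y)).hasFDerivAt.comp_hasDerivAt y
          ((hasDerivAt_const y x).prodMk (hasDerivAt_id y)))
      (hcont.comp (by fun_prop)) (fun y => by simpa using hper (x, y))
  have hint := hcont.integrableOn_torusBox
  rw [torusBox_eq_prod, Measure.volume_eq_prod] at hint ⊢
  rw [setIntegral_prod _ hint]
  simp [hslice]

end Integration

def gradDot (u v : ℝ × ℝ → ℝ) (x : ℝ × ℝ) : ℝ := pd1 u x * pd1 v x + pd2 u x * pd2 v x

section Green

variable {τ : ℝ} {f g μ v : ℝ × ℝ → ℝ}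

theorem SmoothPeriodic.continuous_gradDot (hf : SmoothPeriodic f) (hg : SmoothPeriodic g) :
    Continuous (gradDot f g) := by
  have := hf.pd1.continuous; have := hf.pd2.continuous
  have := hg.pd1.continuous; have := hg.pd2.continuous
  unfold gradDot; fun_prop

theorem integral_lap_mul (hf : SmoothPeriodic f) (hg : SmoothPeriodic g) :
    ∫ x in torusBox, lap f x * g x = -∫ x in torusBox, gradDot f g x := by
  have h1 := integral_pd1_eq_zero ((hf.pd1.mul hg).contDiff_nat 1) (hf.pd1.mul hg).periodic_fst
  have h2 := integral_pd2_eq_zero ((hf.pd2.mul hg).contDiff_nat 1) (hf.pd2.mul hg).periodic_snd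
  have hsum : ∀ x, pd1 (fun y => pd1 f y * g y) x + pd2 (fun y => pd2 f y * g y) x
      = lap f x * g x + gradDot f g x := fun x => by
    simp only [pd1_mul_s12 hf.pd1.differentiable hg.differentiable,
      pd2_mul_s12 hf.pd2.differentiable hg.differentiable, lap, gradDot]
    ring
  rw [eq_neg_iff_add_eq_zero, ← integral_add (hf.lap.mul hg).continuous.integrableOn_torusBox
    (hf.continuous_gradDot hg).integrableOn_torusBox, ← funext hsum,
    integral_add ((hf.pd1.mul hg).pd1.continuous.integrableOn_torusBox)
    ((hf.pd2.mul hg).pd2.continuous.integrableOn_torusBox), h1, h2, add_zero]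

theorem integral_mul_eq_of_eq_mul_lap (hμ : SmoothPeriodic μ) (hg : SmoothPeriodic g)
    (hv : ∀ x, v x = τ * lap μ x) :
    ∫ x in torusBox, g x * v x = -τ * ∫ x in torusBox, gradDot μ g x := by
  simp_rw [hv, mul_left_comm _ τ, mul_comm (g _)]
  rw [integral_const_mul, integral_lap_mul hμ hg, mul_neg, neg_mul]

theorem neg_mul_mul_le_of_sq_mul_eq {c τ ν : ℝ} (hτ : 0 ≤ τ) (hc : c ^ 2 * τ = 2 * ν)
    (p q : ℝ) : -(c * τ * (p * q)) ≤ τ * p ^ 2 + ν / 2 * q ^ 2 := by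
  nlinarith [mul_nonneg hτ (sq_nonneg (p + c * q / 2))]

theorem sqrt_mul_L2sq_le {ν : ℝ} (hν : 0 < ν) (hτ : 0 < τ) (hμ : SmoothPeriodic μ)
    (hv : SmoothPeriodic v) (hvμ : ∀ x, v x = τ * lap μ x) :
    √(2 * ν / τ) * L2sq v ≤
      τ * (∫ x in torusBox, gradDot μ μ x) + ν / 2 * ∫ x in torusBox, gradDot v v x := by
  have hc : √(2 * ν / τ) ^ 2 * τ = 2 * ν := by
    rw [sq_sqrt (by positivity)]; field_simp
  have hpt : ∀ x, -(√(2 * ν / τ) * τ * gradDot μ v x) ≤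
      τ * gradDot μ μ x + ν / 2 * gradDot v v x := fun x => by
    have h1 := neg_mul_mul_le_of_sq_mul_eq hτ.le hc (pd1 μ x) (pd1 v x)
    have h2 := neg_mul_mul_le_of_sq_mul_eq hτ.le hc (pd2 μ x) (pd2 v x)
    simp only [gradDot]
    linarith
  have hQ : L2sq v = -τ * ∫ x in torusBox, gradDot μ v x := by
    rw [L2sq, ← integral_mul_eq_of_eq_mul_lap hμ hv hvμ]
    simp_rw [sq]
  have hμv := (hμ.continuous_gradDot hv).integrableOn_torusBox
  have hμμ := (hμ.continuous_gradDot hμ).integrableOn_torusBox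
  have hvv := (hv.continuous_gradDot hv).integrableOn_torusBox
  calc √(2 * ν / τ) * L2sq v = ∫ x in torusBox, -(√(2 * ν / τ) * τ * gradDot μ v x) := by
        rw [hQ, integral_neg, integral_const_mul]; ring
    _ ≤ ∫ x in torusBox, (τ * gradDot μ μ x + ν / 2 * gradDot v v x) :=
        integral_mono (hμv.const_mul _).neg ((hμμ.const_mul _).add (hvv.const_mul _)) hpt
    _ = _ := by
        rw [integral_add (hμμ.const_mul _) (hvv.const_mul _), integral_const_mul,
          integral_const_mul]

end Green

/-- `F(b) - F(a) - f(a)(b - a) = (b - a)² (3a² + 2ab + b² - 2) / 4` for `F(u) = (u² - 1)²/4`,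
and `3a² + 2ab + b² ≤ 4a² + 2b²`. -/
theorem doubleWell_sub_le {a b α β : ℝ} (ha : |a| ≤ α) (hb : |b| ≤ β) :
    1 / 4 * (b ^ 2 - 1) ^ 2 - 1 / 4 * (a ^ 2 - 1) ^ 2 ≤
      (a ^ 3 - a) * (b - a) + (α ^ 2 + 1 / 2 * β ^ 2 - 1 / 2) * (b - a) ^ 2 := by
  have ha2 : a ^ 2 ≤ α ^ 2 := sq_le_sq' (neg_le_of_abs_le ha) (le_of_abs_le ha)
  have hb2 : b ^ 2 ≤ β ^ 2 := sq_le_sq' (neg_le_of_abs_le hb) (le_of_abs_le hb)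
  nlinarith [mul_nonneg (sq_nonneg (b - a)) (sub_nonneg.2 ha2),
    mul_nonneg (sq_nonneg (b - a)) (sub_nonneg.2 hb2), sq_nonneg ((b - a) ^ 2)]

theorem ECH_sub_le (ν : ℝ) {u₀ u₁ : ℝ × ℝ → ℝ} {α β : ℝ} (h₀ : SmoothPeriodic u₀)
    (h₁ : SmoothPeriodic u₁) (hα : ∀ x, |u₀ x| ≤ α) (hβ : ∀ x, |u₁ x| ≤ β) :
    ECH ν u₁ - ECH ν u₀ ≤
      ν * (∫ x in torusBox, gradDot u₁ (fun y => u₁ y - u₀ y) x)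
        - ν / 2 * (∫ x in torusBox, gradDot (fun y => u₁ y - u₀ y) (fun y => u₁ y - u₀ y) x)
        + (∫ x in torusBox, (u₀ x ^ 3 - u₀ x) * (u₁ x - u₀ x))
        + (α ^ 2 + 1 / 2 * β ^ 2 - 1 / 2) * L2sq (fun x => u₁ x - u₀ x) := by
  set v := fun y => u₁ y - u₀ y
  have hv : SmoothPeriodic v := h₁.sub h₀
  have hpt : ∀ x, ν / 2 * (pd1 u₁ x ^ 2 + pd2 u₁ x ^ 2) + 1 / 4 * (u₁ x ^ 2 - 1) ^ 2
      - (ν / 2 * (pd1 u₀ x ^ 2 + pd2 u₀ x ^ 2) + 1 / 4 * (u₀ x ^ 2 - 1) ^ 2) ≤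
      ν * gradDot u₁ v x - ν / 2 * gradDot v v x + (u₀ x ^ 3 - u₀ x) * v x
        + (α ^ 2 + 1 / 2 * β ^ 2 - 1 / 2) * v x ^ 2 := fun x => by
    have := doubleWell_sub_le (hα x) (hβ x)
    simp only [gradDot, v, pd1_sub h₁.differentiable h₀.differentiable,
      pd2_sub h₁.differentiable h₀.differentiable]
    linarith
  have := h₀.continuous; have := h₁.continuous; have := hv.continuous
  have := h₀.pd1.continuous; have := h₀.pd2.continuous
  have := h₁.pd1.continuous; have := h₁.pd2.continuous
  have := h₁.continuous_gradDot hv; have := hv.continuous_gradDot hv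
  calc ECH ν u₁ - ECH ν u₀ = ∫ x in torusBox, (ν / 2 * (pd1 u₁ x ^ 2 + pd2 u₁ x ^ 2)
      + 1 / 4 * (u₁ x ^ 2 - 1) ^ 2 - (ν / 2 * (pd1 u₀ x ^ 2 + pd2 u₀ x ^ 2)
      + 1 / 4 * (u₀ x ^ 2 - 1) ^ 2)) := by
        rw [ECH, ECH, integral_sub] <;> exact Continuous.integrableOn_torusBox (by fun_prop)
    _ ≤ ∫ x in torusBox, (ν * gradDot u₁ v x - ν / 2 * gradDot v v x + (u₀ x ^ 3 - u₀ x) * v x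
        + (α ^ 2 + 1 / 2 * β ^ 2 - 1 / 2) * v x ^ 2) :=
        integral_mono (Continuous.integrableOn_torusBox (by fun_prop))
          (Continuous.integrableOn_torusBox (by fun_prop)) hpt
    _ = _ := by
        rw [integral_add, integral_add, integral_sub, integral_const_mul, integral_const_mul,
          integral_const_mul, L2sq]
        all_goals exact Continuous.integrableOn_torusBox (by fun_prop)

def chemPot (ν A : ℝ) (u₀ u₁ w : ℝ × ℝ → ℝ) (x : ℝ × ℝ) : ℝ :=
  -ν * lap u₁ x + A * (u₁ x - u₀ x) + w x

section ChemPot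

variable {ν A : ℝ} {u₀ u₁ w : ℝ × ℝ → ℝ}

theorem SmoothPeriodic.chemPot (h₀ : SmoothPeriodic u₀) (h₁ : SmoothPeriodic u₁)
    (hw : SmoothPeriodic w) : SmoothPeriodic (chemPot ν A u₀ u₁ w) :=
  ((h₁.lap.const_mul (-ν)).add ((h₁.sub h₀).const_mul A)).add hw

theorem lap_chemPot (x : ℝ × ℝ) (h₀ : SmoothPeriodic u₀) (h₁ : SmoothPeriodic u₁)
    (hw : SmoothPeriodic w) :
    lap (chemPot ν A u₀ u₁ w) x =
      -ν * lap (lap u₁) x + A * lap (fun y => u₁ y - u₀ y) x + lap w x := by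
  have hl := h₁.lap.const_mul (-ν)
  have hv := (h₁.sub h₀).const_mul A
  unfold chemPot
  rw [lap_add ((hl.add hv).contDiff_nat 2) (hw.contDiff_nat 2),
    lap_add (hl.contDiff_nat 2) (hv.contDiff_nat 2), lap_const_mul (h₁.lap.contDiff_nat 2),
    lap_const_mul ((h₁.sub h₀).contDiff_nat 2)]

theorem integral_chemPot_mul (h₀ : SmoothPeriodic u₀) (h₁ : SmoothPeriodic u₁)
    (hw : SmoothPeriodic w) :
    ∫ x in torusBox, chemPot ν A u₀ u₁ w x * (u₁ x - u₀ x) =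
      ν * (∫ x in torusBox, gradDot u₁ (fun y => u₁ y - u₀ y) x)
        + A * L2sq (fun x => u₁ x - u₀ x) + ∫ x in torusBox, w x * (u₁ x - u₀ x) := by
  have hv := h₁.sub h₀
  have := h₁.lap.continuous; have := hv.continuous; have := hw.continuous
  simp only [chemPot, add_mul, mul_assoc]
  rw [integral_add, integral_add, integral_const_mul, integral_const_mul,
    integral_lap_mul h₁ hv, L2sq]
  · simp_rw [sq]; ring
  all_goals exact Continuous.integrableOn_torusBox (by fun_prop)

end ChemPot

theorem CH_one_step_energy_general (ν τ A : ℝ) (hν : 0 < ν) (hτ : 0 < τ)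
    (N : ℕ) (un un1 w : ℝ × ℝ → ℝ)
    (hun : IsTrigPoly N un) (hun1 : IsTrigPoly N un1) (hw : IsTrigPoly N w)
    -- `w = Π_N f(u^n)`: `w` is the `L²` projection of `f(u^n) = (u^n)³ - u^n` onto `X_N`
    (hproj : ∀ v : ℝ × ℝ → ℝ, IsTrigPoly N v →
      ∫ x in torusBox, (w x - ((un x) ^ 3 - un x)) * v x = 0)
    -- the scheme
    (hscheme : ∀ x : ℝ × ℝ, (un1 x - un x) / τ =
      -ν * lap (lap un1) x + A * lap (fun y => un1 y - un y) x + lap w x) :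
    ECH ν un1 - ECH ν un +
        (A + 1 / 2 + Real.sqrt (2 * ν / τ)) * L2sq (fun x => un1 x - un x) ≤
      L2sq (fun x => un1 x - un x) *
        ((Linf un) ^ 2 + (1 / 2) * (Linf un1) ^ 2) := by
  have h₀ := hun.smoothPeriodic
  have h₁ := hun1.smoothPeriodic
  have hw' := hw.smoothPeriodic
  have hv := h₁.sub h₀
  have hμ : SmoothPeriodic (chemPot ν A un un1 w) := h₀.chemPot h₁ hw'
  have hvμ : ∀ x, un1 x - un x = τ * lap (chemPot ν A un un1 w) x := fun x => by
    rw [lap_chemPot x h₀ h₁ hw', ← hscheme x, mul_div_cancel₀ _ hτ.ne']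
  have hwv : ∫ x in torusBox, w x * (un1 x - un x) =
      ∫ x in torusBox, (un x ^ 3 - un x) * (un1 x - un x) := by
    have h := hproj _ (hun1.sub hun)
    simp_rw [sub_mul (w _)] at h
    have := h₀.continuous; have := h₁.continuous; have := hw'.continuous
    rwa [integral_sub, sub_eq_zero] at h <;> exact Continuous.integrableOn_torusBox (by fun_prop)
  have hμv := integral_mul_eq_of_eq_mul_lap hμ hμ hvμ
  rw [integral_chemPot_mul h₀ h₁ hw', hwv] at hμv
  have hE := ECH_sub_le ν h₀ h₁ hun.abs_le_Linf hun1.abs_le_Linf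
  have hY := sqrt_mul_L2sq_le hν hτ hμ hv hvμ
  linarith

/-- One-step energy estimate for the stabilized semi-implicit Fourier–Galerkin
scheme for Cahn–Hilliard:
`(u^{n+1}-u^n)/τ = -νΔ²u^{n+1} + AΔ(u^{n+1}-u^n) + ΔΠ_N f(u^n)`, `f(u)=u³-u`. -/
theorem CH_one_step_energy (ν τ A : ℝ) (hν : 0 < ν) (hτ : 0 < τ) (hA : 0 < A)
    (N : ℕ) (un un1 w : ℝ × ℝ → ℝ)
    (hun : IsTrigPoly N un) (hun1 : IsTrigPoly N un1) (hw : IsTrigPoly N w)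
    (hmean : ∫ x in torusBox, un x = 0) (hmean1 : ∫ x in torusBox, un1 x = 0)
    -- `w = Π_N f(u^n)`: `w` is the `L²` projection of `f(u^n) = (u^n)³ - u^n` onto `X_N`
    (hproj : ∀ v : ℝ × ℝ → ℝ, IsTrigPoly N v →
      ∫ x in torusBox, (w x - ((un x) ^ 3 - un x)) * v x = 0)
    -- the scheme
    (hscheme : ∀ x : ℝ × ℝ, (un1 x - un x) / τ =
      -ν * lap (lap un1) x + A * lap (fun y => un1 y - un y) x + lap w x) :
    ECH ν un1 - ECH ν un +
        (A + 1 / 2 + Real.sqrt (2 * ν / τ)) * L2sq (fun x => un1 x - un x) ≤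
      L2sq (fun x => un1 x - un x) *
        ((Linf un) ^ 2 + (1 / 2) * (Linf un1) ^ 2) :=
  CH_one_step_energy_general ν τ A hν hτ N un un1 w hun hun1 hw hproj hscheme
end
end
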